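/- Let n = 5/2, q = 2, k < 0, and let c ∈ ℝ. Fix a sign ε ∈ {1, −1}. Then the function u(t,r) = ε·5(3(t+c) + r²)/(r(15(t+c) + r²)·√(−2k)) is a solution of the semilinear radial heat equation u_t = u_rr + (3/2) r⁻¹ u_r + k u³ on any open subset of {(t,r) : r > 0, 15(t+c) + r² ≠ 0}. -/

import Mathlib

/-! The solution is `e / √(-2k)` times the time translate by `c` of the profile
`f(τ, r) = 5(3τ + r²)/(r(15τ + r²))`. Time translation commutes with the equation, and
scaling a solution by `a` turns the coefficient `k₀` into `k₀ / a²`; so it suffices that `f`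
solves the equation with `k = -1/2`, which is an explicit rational identity in `τ` and `r`. -/

noncomputable section

def pdt (u : ℝ × ℝ → ℝ) (p : ℝ × ℝ) : ℝ := deriv (fun s => u (s, p.2)) p.1

def pdr (u : ℝ × ℝ → ℝ) (p : ℝ × ℝ) : ℝ := deriv (fun s => u (p.1, s)) p.2

def pdrr (u : ℝ × ℝ → ℝ) (p : ℝ × ℝ) : ℝ :=
  deriv (fun s => deriv (fun s' => u (p.1, s')) s) p.2

/-- The semilinear radial heat equation for `n = 5/2`, `q = 2`:
`u_t = u_rr + (3/2) r⁻¹ u_r + k u³`. -/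
def HeatEqCubic (k : ℝ) (u : ℝ × ℝ → ℝ) (p : ℝ × ℝ) : Prop :=
  pdt u p = pdrr u p + (3 / 2) * (p.2)⁻¹ * pdr u p + k * u p ^ 3

open Filter Topology

theorem HeatEqCubic.const_mul {k₀ k a : ℝ} {u : ℝ × ℝ → ℝ} {p : ℝ × ℝ}
    (h : HeatEqCubic k₀ u p) (hk : k * a ^ 2 = k₀) :
    HeatEqCubic k (fun q => a * u q) p := by
  unfold HeatEqCubic pdt pdr pdrr at *
  simp only [deriv_const_mul_field']
  rw [h, ← hk]
  ring

theorem HeatEqCubic.comp_add_time {k c : ℝ} {u : ℝ × ℝ → ℝ} {t r : ℝ}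
    (h : HeatEqCubic k u (t + c, r)) :
    HeatEqCubic k (fun q => u (q.1 + c, q.2)) (t, r) := by
  unfold HeatEqCubic pdt at *
  rwa [deriv_comp_add_const (fun s => u (s, r))]

def similarityProfile (τ r : ℝ) : ℝ :=
  5 * (3 * τ + r ^ 2) / (r * (15 * τ + r ^ 2))

section Profile

variable {τ r : ℝ}

theorem hasDerivAt_similarityProfile_time (hr : r ≠ 0) (hS : 15 * τ + r ^ 2 ≠ 0) :
    HasDerivAt (fun s => similarityProfile s r) (-60 * r / (15 * τ + r ^ 2) ^ 2) τ := by
  have hnum : HasDerivAt (fun s => 5 * (3 * s + r ^ 2)) 15 τ :=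
    ((((hasDerivAt_id τ).const_mul 3).add_const (r ^ 2)).const_mul 5).congr_deriv (by norm_num)
  have hden : HasDerivAt (fun s => r * (15 * s + r ^ 2)) (15 * r) τ :=
    ((((hasDerivAt_id τ).const_mul 15).add_const (r ^ 2)).const_mul r).congr_deriv
      (by simp [mul_comm])
  refine (hnum.fun_div hden (mul_ne_zero hr hS)).congr_deriv ?_
  field_simp
  ring

theorem hasDerivAt_similarityProfile_radius (hr : r ≠ 0) (hS : 15 * τ + r ^ 2 ≠ 0) :
    HasDerivAt (fun s => similarityProfile τ s)
      (-5 * (45 * τ ^ 2 - 6 * τ * r ^ 2 + r ^ 4) / (r ^ 2 * (15 * τ + r ^ 2) ^ 2)) r := by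
  have hnum : HasDerivAt (fun s => 5 * (3 * τ + s ^ 2)) (10 * r) r :=
    (((hasDerivAt_pow 2 r).const_add (3 * τ)).const_mul 5).congr_deriv (by norm_num; ring)
  have hden : HasDerivAt (fun s => s * (15 * τ + s ^ 2)) (15 * τ + 3 * r ^ 2) r :=
    ((hasDerivAt_id r).mul ((hasDerivAt_pow 2 r).const_add (15 * τ))).congr_deriv
      (by norm_num; ring)
  refine (hnum.fun_div hden (mul_ne_zero hr hS)).congr_deriv ?_
  field_simp
  ring

theorem hasDerivAt_similarityProfile_radius_radius (hr : r ≠ 0) (hS : 15 * τ + r ^ 2 ≠ 0) :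
    HasDerivAt
      (fun s => -5 * (45 * τ ^ 2 - 6 * τ * s ^ 2 + s ^ 4) / (s ^ 2 * (15 * τ + s ^ 2) ^ 2))
      (10 * (675 * τ ^ 3 + 135 * τ ^ 2 * r ^ 2 - 27 * τ * r ^ 4 + r ^ 6)
        / (r ^ 3 * (15 * τ + r ^ 2) ^ 3)) r := by
  have hnum : HasDerivAt (fun s => -5 * (45 * τ ^ 2 - 6 * τ * s ^ 2 + s ^ 4))
      (-5 * (-(12 * τ * r) + 4 * r ^ 3)) r :=
    (((((hasDerivAt_pow 2 r).const_mul (6 * τ)).const_sub (45 * τ ^ 2)).add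
      (hasDerivAt_pow 4 r)).const_mul (-5)).congr_deriv (by norm_num; ring)
  have hden : HasDerivAt (fun s => s ^ 2 * (15 * τ + s ^ 2) ^ 2)
      (2 * r * (15 * τ + r ^ 2) ^ 2 + r ^ 2 * (2 * (15 * τ + r ^ 2) * (2 * r))) r :=
    ((hasDerivAt_pow 2 r).mul (((hasDerivAt_pow 2 r).const_add (15 * τ)).pow 2)).congr_deriv
      (by norm_num)
  refine (hnum.fun_div hden (mul_ne_zero (pow_ne_zero 2 hr) (pow_ne_zero 2 hS))).congr_deriv ?_
  field_simp
  ring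

theorem heatEqCubic_similarityProfile (hr : r ≠ 0) (hS : 15 * τ + r ^ 2 ≠ 0) :
    HeatEqCubic (-1 / 2) (fun q => similarityProfile q.1 q.2) (τ, r) := by
  have hS_near : ∀ᶠ s in 𝓝 r, s ≠ 0 ∧ 15 * τ + s ^ 2 ≠ 0 :=
    (continuousAt_id.eventually_ne hr).and ((by fun_prop : Continuous fun s : ℝ =>
      15 * τ + s ^ 2).continuousAt.eventually_ne hS)
  have hRR : pdrr (fun q => similarityProfile q.1 q.2) (τ, r)
      = 10 * (675 * τ ^ 3 + 135 * τ ^ 2 * r ^ 2 - 27 * τ * r ^ 4 + r ^ 6)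
        / (r ^ 3 * (15 * τ + r ^ 2) ^ 3) := by
    unfold pdrr
    rw [EventuallyEq.deriv_eq (hS_near.mono fun s hs =>
      (hasDerivAt_similarityProfile_radius hs.1 hs.2).deriv)]
    exact (hasDerivAt_similarityProfile_radius_radius hr hS).deriv
  unfold HeatEqCubic
  rw [hRR, pdt, pdr, (hasDerivAt_similarityProfile_time hr hS).deriv,
    (hasDerivAt_similarityProfile_radius hr hS).deriv]
  simp only [similarityProfile]
  field_simp
  ring

end Profile

theorem exact_solution_similarity_b_general (k c e : ℝ) (hk : k < 0) (he : e = 1 ∨ e = -1)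
    (D : Set (ℝ × ℝ))
    (hDsub : D ⊆ {p : ℝ × ℝ | 0 < p.2 ∧ 15 * (p.1 + c) + p.2 ^ 2 ≠ 0}) :
    ∀ p ∈ D,
      HeatEqCubic k (fun p : ℝ × ℝ =>
        e * (5 * (3 * (p.1 + c) + p.2 ^ 2))
          / (p.2 * (15 * (p.1 + c) + p.2 ^ 2) * Real.sqrt (-2 * k))) p := by
  rintro ⟨t, r⟩ hp
  obtain ⟨hr, hS⟩ := hDsub hp
  have hsqrt : Real.sqrt (-2 * k) ^ 2 = -2 * k := Real.sq_sqrt (by linarith)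
  have he2 : e ^ 2 = 1 := by rcases he with rfl | rfl <;> norm_num
  have hscale : k * (e / Real.sqrt (-2 * k)) ^ 2 = -1 / 2 := by
    rw [div_pow, hsqrt, he2]
    field_simp [hk.ne]
  have hsol := ((heatEqCubic_similarityProfile hr.ne' hS).comp_add_time).const_mul hscale
  convert hsol using 2 with q
  simp only [similarityProfile, div_mul_div_comm]
  ring

/-- the similarity exact solution
`u = ε 5(3(t+c)+r²)/(r(15(t+c)+r²)√(-2k))` for `n = 5/2`, `q = 2`, `k < 0`. -/
theorem exact_solution_similarity_b (k c e : ℝ) (hk : k < 0) (he : e = 1 ∨ e = -1)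
    (D : Set (ℝ × ℝ)) (hD : IsOpen D)
    (hDsub : D ⊆ {p : ℝ × ℝ | 0 < p.2 ∧ 15 * (p.1 + c) + p.2 ^ 2 ≠ 0}) :
    ∀ p ∈ D,
      HeatEqCubic k (fun p : ℝ × ℝ =>
        e * (5 * (3 * (p.1 + c) + p.2 ^ 2))
          / (p.2 * (15 * (p.1 + c) + p.2 ^ 2) * Real.sqrt (-2 * k))) p :=
  exact_solution_similarity_b_general k c e hk he D hDsub
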